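/- arXiv:0909.3225 — 2 statements merged into one kernel-verified Lean document; each statement's English description precedes it below -/
import Mathlib

section
/- Suppose m : ℝⁿ \ {0} → ℂ satisfies |∂^α m(ξ)| ≤ C |ξ|^{-|α|} for all multi-indices α ∈ {0,1}ⁿ with |α| ≤ ⌈nγ⌉, where γ ∈ (0,1]. Then for every α ∈ {0,1}ⁿ with |α| ≤ ⌈nγ⌉ and every h ∈ ℝⁿ with |ξ| > 2|h|, the Mihlin–Hölder estimate |∏_{i : α_i=1}(I - τ_{h_i e_i})m(ξ)| ≤ C' |h^{αγ}| |ξ|^{-|α|γ} holds, with C' depending only on C, n, γ. -/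
open MeasureTheory

noncomputable section

/-- The `i`-th standard basis vector of `ℝⁿ`. -/
def stdBasis {n : ℕ} (i : Fin n) : EuclideanSpace ℝ (Fin n) := EuclideanSpace.single i 1

/-- Iterated partial derivative `∂^α` along the coordinates listed in `L`. -/
noncomputable def iterPDeriv {n : ℕ} (L : List (Fin n)) (m : EuclideanSpace ℝ (Fin n) → ℂ) :
    EuclideanSpace ℝ (Fin n) → ℂ :=
  L.foldr (fun i g => fun x => fderiv ℝ g x (stdBasis i)) m

/-- Iterated difference `∏_{i ∈ S} (I - τ_{h_i e_i}) m (ξ)`. -/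
def iterDiff {n : ℕ} (h : EuclideanSpace ℝ (Fin n)) (S : Finset (Fin n))
    (m : EuclideanSpace ℝ (Fin n) → ℂ) (ξ : EuclideanSpace ℝ (Fin n)) : ℂ :=
  ∑ T ∈ S.powerset, (-1 : ℂ) ^ T.card * m (ξ - ∑ i ∈ T, h i • stdBasis i)

/-!
Two bounds on `X = ‖Δ_h^S m(ξ)‖` are interpolated. Every vertex `ξ - ∑_{i ∈ T} h_i e_i` lies in
the ball `B = B̄(ξ, ‖h‖)`, on which `‖x‖ > ‖ξ‖ / 2`. Bounding the `2^|S|` terms separately gives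
`X ≤ 2^|S| C`; one application of the mean value theorem per direction `i ∈ S` gives
`X ≤ ∏ |h_i| · sup_B ‖∂^S m‖ ≤ 2^|S| C · ∏ |h_i| ‖ξ‖^{-|S|}`. Finally `X ≤ K` and `X ≤ K Q`
imply `X ≤ K Q^γ` for `γ ∈ [0, 1]`.
-/

theorem Convex.sub_smul_mem_of_mem_uIcc {E : Type*} [AddCommGroup E] [Module ℝ E] {K : Set E}
    (hK : Convex ℝ K) {a v : E} {s t : ℝ} (ha : a ∈ K) (hs : a - s • v ∈ K)
    (ht : t ∈ Set.uIcc 0 s) : a - t • v ∈ K := by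
  have hline : ∀ r : ℝ, AffineMap.lineMap a (a - v) r = a - r • v := fun r => by
    rw [AffineMap.lineMap_apply_module]; module
  have hconv : Convex ℝ ((AffineMap.lineMap a (a - v) : ℝ →ᵃ[ℝ] E) ⁻¹' K) :=
    hK.affine_preimage _
  have := (convex_iff_ordConnected.mp hconv).uIcc_subset
    (x := 0) (by simpa [hline] using ha) (y := s) (by simpa [hline] using hs) ht
  simpa [hline] using this

theorem le_mul_rpow_of_le_of_le_mul {X K Q γ : ℝ} (hX : 0 ≤ X) (hK : 0 < K) (hQ : 0 ≤ Q)
    (hγ0 : 0 ≤ γ) (hγ1 : γ ≤ 1) (h₁ : X ≤ K) (h₂ : X ≤ K * Q) : X ≤ K * Q ^ γ :=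
  calc X = X ^ (1 - γ) * X ^ γ := by
        rw [← Real.rpow_add' hX (by norm_num), sub_add_cancel, Real.rpow_one]
    _ ≤ K ^ (1 - γ) * (K * Q) ^ γ := by gcongr
    _ = K * Q ^ γ := by
        rw [Real.mul_rpow hK.le hQ, ← mul_assoc, ← Real.rpow_add hK, sub_add_cancel, Real.rpow_one]

theorem rpow_neg_natCast_le_two_pow_mul {r x : ℝ} (hr : 0 < r) (hx : r / 2 ≤ x) (k : ℕ) :
    x ^ (-(k : ℝ)) ≤ 2 ^ k * r ^ (-(k : ℝ)) :=
  calc x ^ (-(k : ℝ)) ≤ (r / 2) ^ (-(k : ℝ)) :=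
        Real.rpow_le_rpow_of_nonpos (half_pos hr) hx (neg_nonpos.mpr k.cast_nonneg)
    _ = 2 ^ k * r ^ (-(k : ℝ)) := by
        rw [Real.div_rpow hr.le zero_le_two, Real.rpow_neg zero_le_two, Real.rpow_natCast]
        field_simp

theorem half_norm_lt_norm_of_mem_closedBall {E : Type*} [SeminormedAddCommGroup E] {ξ x : E}
    {r : ℝ} (hr : 2 * r < ‖ξ‖) (hx : x ∈ Metric.closedBall ξ r) : ‖ξ‖ / 2 < ‖x‖ := by
  rw [Metric.mem_closedBall, dist_eq_norm, norm_sub_rev] at hx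
  linarith [norm_sub_norm_le ξ x]

section

variable {n : ℕ}

theorem norm_sum_smul_stdBasis_le (h : EuclideanSpace ℝ (Fin n)) (T : Finset (Fin n)) :
    ‖∑ i ∈ T, h i • stdBasis i‖ ≤ ‖h‖ := by
  rw [EuclideanSpace.norm_eq, EuclideanSpace.norm_eq]
  gcongr with i
  simp only [stdBasis, WithLp.ofLp_sum, WithLp.ofLp_smul, PiLp.ofLp_single,
    Finset.sum_apply, Pi.smul_apply, Pi.single_apply, smul_eq_mul, mul_ite, mul_one, mul_zero,
    Finset.sum_ite_eq, Real.norm_eq_abs]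
  split_ifs <;> simp

theorem iterDiff_empty (h : EuclideanSpace ℝ (Fin n)) (f : EuclideanSpace ℝ (Fin n) → ℂ)
    (ξ : EuclideanSpace ℝ (Fin n)) : iterDiff h ∅ f ξ = f ξ := by
  simp [iterDiff]

theorem norm_iterDiff_le (h : EuclideanSpace ℝ (Fin n)) (S : Finset (Fin n))
    {f : EuclideanSpace ℝ (Fin n) → ℂ} {ξ : EuclideanSpace ℝ (Fin n)} {D : ℝ}
    (hD : ∀ T ⊆ S, ‖f (ξ - ∑ i ∈ T, h i • stdBasis i)‖ ≤ D) :
    ‖iterDiff h S f ξ‖ ≤ 2 ^ S.card * D := by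
  calc ‖iterDiff h S f ξ‖
      ≤ ∑ T ∈ S.powerset, ‖(-1 : ℂ) ^ T.card * f (ξ - ∑ i ∈ T, h i • stdBasis i)‖ :=
        norm_sum_le _ _
    _ ≤ ∑ _T ∈ S.powerset, D := by
        gcongr with T hT
        simpa using hD T (Finset.mem_powerset.mp hT)
    _ = 2 ^ S.card * D := by simp

theorem iterDiff_insert (h : EuclideanSpace ℝ (Fin n)) {j : Fin n} {S : Finset (Fin n)}
    (hj : j ∉ S) (f : EuclideanSpace ℝ (Fin n) → ℂ) (ξ : EuclideanSpace ℝ (Fin n)) :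
    iterDiff h (insert j S) f ξ = iterDiff h S f ξ - iterDiff h S f (ξ - h j • stdBasis j) := by
  unfold iterDiff
  rw [Finset.sum_powerset_insert hj, sub_eq_add_neg, ← Finset.sum_neg_distrib]
  congr 1
  refine Finset.sum_congr rfl fun T hT => ?_
  have hjT : j ∉ T := fun hjT => hj (Finset.mem_powerset.mp hT hjT)
  rw [Finset.card_insert_of_notMem hjT, Finset.sum_insert hjT, pow_succ, sub_add_eq_sub_sub,
    sub_right_comm]
  ring

theorem hasDerivAt_iterDiff_sub_smul (h : EuclideanSpace ℝ (Fin n)) (S : Finset (Fin n))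
    {f : EuclideanSpace ℝ (Fin n) → ℂ} {ξ v : EuclideanSpace ℝ (Fin n)} {t : ℝ}
    (hf : ∀ T ⊆ S, DifferentiableAt ℝ f (ξ - t • v - ∑ i ∈ T, h i • stdBasis i)) :
    HasDerivAt (fun s : ℝ => iterDiff h S f (ξ - s • v))
      (-iterDiff h S (fun x => fderiv ℝ f x v) (ξ - t • v)) t := by
  unfold iterDiff
  rw [← Finset.sum_neg_distrib]
  refine HasDerivAt.fun_sum fun T hT => ?_
  have hline : HasDerivAt (fun s : ℝ => ξ - s • v - ∑ i ∈ T, h i • stdBasis i) (-v) t := by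
    simpa using
      (((hasDerivAt_id t).smul_const v).const_sub ξ).sub_const (∑ i ∈ T, h i • stdBasis i)
  simpa using ((hf T (Finset.mem_powerset.mp hT)).hasFDerivAt.comp_hasDerivAt t hline).const_mul
    ((-1 : ℂ) ^ T.card)

theorem iterPDeriv_append_singleton (L : List (Fin n)) (j : Fin n)
    (f : EuclideanSpace ℝ (Fin n) → ℂ) :
    iterPDeriv (L ++ [j]) f = iterPDeriv L (fun x => fderiv ℝ f x (stdBasis j)) := by
  simp [iterPDeriv, List.foldr_append]

theorem norm_iterDiff_le_prod_mul {U K : Set (EuclideanSpace ℝ (Fin n))} (hU : IsOpen U)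
    (hK : Convex ℝ K) (hKU : K ⊆ U) (h : EuclideanSpace ℝ (Fin n)) {D : ℝ}
    (S : Finset (Fin n)) {f : EuclideanSpace ℝ (Fin n) → ℂ} (hf : ContDiffOn ℝ S.card f U)
    (hD : ∀ L : List (Fin n), L.Nodup → L.toFinset = S → ∀ x ∈ K, ‖iterPDeriv L f x‖ ≤ D)
    {ξ : EuclideanSpace ℝ (Fin n)} (hξ : ∀ T ⊆ S, ξ - ∑ i ∈ T, h i • stdBasis i ∈ K) :
    ‖iterDiff h S f ξ‖ ≤ (∏ i ∈ S, |h i|) * D := by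
  induction S using Finset.induction_on generalizing f ξ with
  | empty =>
    simpa [iterDiff_empty, iterPDeriv] using
      hD [] List.nodup_nil rfl ξ (by simpa using hξ ∅ subset_rfl)
  | insert j S hj ih =>
    -- `Δ^{insert j S} f ξ = φ 0 - φ (h j)` for `φ t = Δ^S f (ξ - t e_j)`, whose derivative is
    -- `-Δ^S (∂_j f) (ξ - t e_j)`; the induction hypothesis bounds it for `f' = ∂_j f`.
    set f' := fun x => fderiv ℝ f x (stdBasis j)
    have hcard : (insert j S).card = S.card + 1 := Finset.card_insert_of_notMem hj
    have hf' : ContDiffOn ℝ S.card f' U :=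
      (hf.fderiv_of_isOpen hU (by rw [hcard]; push_cast; rfl)).clm_apply contDiffOn_const
    have hD' : ∀ L : List (Fin n), L.Nodup → L.toFinset = S → ∀ x ∈ K,
        ‖iterPDeriv L f' x‖ ≤ D := by
      intro L hL hLS x hx
      have hjL : j ∉ L := by rwa [← List.mem_toFinset, hLS]
      -- `∂_j` is applied first here, which is why `hD` is assumed for every ordering of `S`.
      rw [← iterPDeriv_append_singleton]
      refine hD _ ?_ ?_ x hx
      · rw [List.nodup_append]
        refine ⟨hL, List.nodup_singleton j, ?_⟩
        rintro a ha b hb rfl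
        exact hjL (List.mem_singleton.mp hb ▸ ha)
      · rw [List.toFinset_append, hLS, Finset.union_comm]
        rfl
    have hseg : ∀ t ∈ Set.uIcc 0 (h j), ∀ T ⊆ S,
        ξ - t • stdBasis j - ∑ i ∈ T, h i • stdBasis i ∈ K := by
      intro t ht T hT
      rw [sub_right_comm]
      refine hK.sub_smul_mem_of_mem_uIcc (hξ T (hT.trans (Finset.subset_insert _ _))) ?_ ht
      rw [sub_right_comm, sub_sub,
        ← Finset.sum_insert (f := fun i => h i • stdBasis i) (fun hjT => hj (hT hjT))]
      exact hξ _ (Finset.insert_subset_insert j hT)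
    have hderiv : ∀ t ∈ Set.uIcc 0 (h j),
        HasDerivWithinAt (fun s => iterDiff h S f (ξ - s • stdBasis j))
          (-iterDiff h S f' (ξ - t • stdBasis j)) (Set.uIcc 0 (h j)) t := fun t ht =>
      (hasDerivAt_iterDiff_sub_smul h S fun T hT =>
        ((hf.differentiableOn (by simp [hcard])).differentiableAt
          (hU.mem_nhds (hKU (hseg t ht T hT))))).hasDerivWithinAt
    have hbound : ∀ t ∈ Set.uIcc 0 (h j),
        ‖-iterDiff h S f' (ξ - t • stdBasis j)‖ ≤ (∏ i ∈ S, |h i|) * D :=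
      fun t ht => by rw [norm_neg]; exact ih hf' hD' (hseg t ht)
    have hmvt := (convex_uIcc 0 (h j)).norm_image_sub_le_of_norm_hasDerivWithin_le hderiv hbound
      Set.left_mem_uIcc Set.right_mem_uIcc
    rw [iterDiff_insert h hj, Finset.prod_insert hj, norm_sub_rev]
    simpa [mul_comm, mul_left_comm] using hmvt

end

/-- If `|∂^α m(ξ)| ≤ C |ξ|^{-|α|}` for all multi-indices `α ∈ {0,1}ⁿ`
(encoded as duplicate-free lists of coordinates) with `|α| ≤ ⌈nγ⌉`, then for every
`α ∈ {0,1}ⁿ` with `|α| ≤ ⌈nγ⌉` and every `h` with `|ξ| > 2|h|`, the Mihlin–Hölder estimate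
`|∏_{i:α_i=1}(I - τ_{h_i e_i}) m(ξ)| ≤ C' |h^{αγ}| |ξ|^{-|α|γ}` holds, with `C'`
depending only on `C, n, γ`. -/
theorem stmt2 {n : ℕ} (γ C : ℝ) (hγ0 : 0 < γ) (hγ1 : γ ≤ 1) (hC : 0 < C)
    (m : EuclideanSpace ℝ (Fin n) → ℂ)
    (hsm : ContDiffOn ℝ ((⌈(n : ℝ) * γ⌉₊ : ℕ) : ℕ∞) m {ξ | ξ ≠ 0})
    (hder : ∀ L : List (Fin n), L.Nodup → L.length ≤ ⌈(n : ℝ) * γ⌉₊ →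
      ∀ ξ : EuclideanSpace ℝ (Fin n), ξ ≠ 0 →
        ‖iterPDeriv L m ξ‖ ≤ C * ‖ξ‖ ^ (-(L.length : ℝ))) :
    ∃ C' > 0, ∀ S : Finset (Fin n), S.card ≤ ⌈(n : ℝ) * γ⌉₊ →
      ∀ h ξ : EuclideanSpace ℝ (Fin n), 2 * ‖h‖ < ‖ξ‖ →
        ‖iterDiff h S m ξ‖ ≤
          C' * (∏ i ∈ S, |h i| ^ γ) * ‖ξ‖ ^ (-(S.card : ℝ) * γ) := by
  refine ⟨2 ^ n * C, by positivity, fun S hS h ξ hξ => ?_⟩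
  set s := S.card
  set B := Metric.closedBall ξ ‖h‖
  have hξ0 : 0 < ‖ξ‖ := (mul_nonneg zero_le_two (norm_nonneg h)).trans_lt hξ
  have hfar : ∀ x ∈ B, ‖ξ‖ / 2 < ‖x‖ := fun x => half_norm_lt_norm_of_mem_closedBall hξ
  have hB0 : B ⊆ {x | x ≠ 0} := fun x hx => norm_pos_iff.mp ((half_pos hξ0).trans (hfar x hx))
  have hvert : ∀ T ⊆ S, ξ - ∑ i ∈ T, h i • stdBasis i ∈ B := fun T _ => by
    simpa [B, dist_eq_norm] using norm_sum_smul_stdBasis_le h T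
  have hA : ‖iterDiff h S m ξ‖ ≤ 2 ^ s * C := norm_iterDiff_le h S fun T hT => by
    simpa [iterPDeriv] using hder [] List.nodup_nil (Nat.zero_le _) _ (hB0 (hvert T hT))
  have hB : ‖iterDiff h S m ξ‖ ≤ (∏ i ∈ S, |h i|) * (C * (2 ^ s * ‖ξ‖ ^ (-(s : ℝ)))) := by
    refine norm_iterDiff_le_prod_mul isOpen_ne (convex_closedBall ξ ‖h‖) hB0 h S
      (hsm.of_le (by exact_mod_cast hS)) (fun L hL hLS x hx => ?_) hvert
    have hlen : L.length = s := by rw [← List.toFinset_card_of_nodup hL, hLS]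
    rw [← hlen]
    exact (hder L hL (hlen ▸ hS) x (hB0 hx)).trans <| mul_le_mul_of_nonneg_left
      (rpow_neg_natCast_le_two_pow_mul hξ0 (hfar x hx).le _) hC.le
  calc ‖iterDiff h S m ξ‖ ≤ 2 ^ s * C * ((∏ i ∈ S, |h i|) * ‖ξ‖ ^ (-(s : ℝ))) ^ γ :=
        le_mul_rpow_of_le_of_le_mul (norm_nonneg _) (by positivity) (by positivity) hγ0.le hγ1
          hA (hB.trans_eq (by ring))
    _ = 2 ^ s * C * (∏ i ∈ S, |h i| ^ γ) * ‖ξ‖ ^ (-(s : ℝ) * γ) := by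
        rw [Real.mul_rpow (by positivity) (by positivity), ← Real.rpow_mul hξ0.le,
          ← Real.finsetProd_rpow _ _ fun i _ => abs_nonneg _]
        ring
    _ ≤ 2 ^ n * C * (∏ i ∈ S, |h i| ^ γ) * ‖ξ‖ ^ (-(s : ℝ) * γ) := by
        gcongr
        · exact one_le_two
        · simpa using S.card_le_univ
end
end

section
/- If X is a Banach space with type t ∈ [1,2] then its dual X* has cotype t' = t/(t-1): there is a constant C such that for all finite sequences x*₁,...,x*_N ∈ X*, (Σ ‖x*_k‖^{t'})^{1/t'} ≤ C 𝔼‖Σ ε_k x*_k‖, where ε_k are independent Rademacher variables. -/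
/-
Given `x*_k ∈ X*`, pick `x_k ∈ X` with `‖x_k‖ ≤ ‖x*_k‖^(t'-1)` and `x*_k x_k ≥ ‖x*_k‖^t' / 2`.
Orthogonality of the Rademacher functions gives
`∑ x*_k x_k = 𝔼 ⟪∑ ε_k x*_k, ∑ ε_k x_k⟫ ≤ 𝔼 (‖∑ ε_k x*_k‖ ‖∑ ε_k x_k‖)`.
By Cauchy-Schwarz and Kahane's inequality `𝔼‖S‖² ≤ K (𝔼‖S‖)²` the right-hand side is at most
`K 𝔼‖∑ ε_k x*_k‖ 𝔼‖∑ ε_k x_k‖`, and the type inequality bounds the last factor by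
`T (∑ ‖x*_k‖^t')^(1/t)`. Since `1/t + 1/t' = 1`, dividing gives the cotype inequality.

Kahane's inequality comes from the Hoffmann-Jørgensen inequality
`P(‖S‖ > 2u + max ‖y_k‖) ≤ 4 P(‖S‖ > u)²`, which follows from Lévy's reflection inequalities
(flipping the signs of a block of coordinates preserves the law of the signs). Iterating it makes
the tails of `‖S‖ / 𝔼‖S‖` decay doubly exponentially.
-/

noncomputable section

open scoped BigOperators
open Finset

section SignFlips

variable {ι E : Type*} [AddCommGroup E] [Module ℝ E]

/-- A sign pattern `s : ι → Bool` is a point of the cube `{±1}^ι`; averaging over all `s` is the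
expectation over independent Rademacher signs. -/
def rademacher (s : ι → Bool) (k : ι) : ℝ := if s k then 1 else -1

def signSum (A : Finset ι) (y : ι → E) (s : ι → Bool) : E := ∑ k ∈ A, rademacher s k • y k

@[simp]
lemma norm_rademacher (s : ι → Bool) (k : ι) : ‖rademacher s k‖ = 1 := by
  cases h : s k <;> simp [rademacher, h]

lemma signSum_congr (A : Finset ι) (y : ι → E) {s s' : ι → Bool}
    (h : ∀ k ∈ A, s k = s' k) : signSum A y s = signSum A y s' :=
  sum_congr rfl fun k hk => by rw [rademacher, rademacher, h k hk]

variable [DecidableEq ι]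

def flipOn (A : Finset ι) (s : ι → Bool) : ι → Bool := A.piecewise (fun k => !s k) s

lemma flipOn_flipOn (A : Finset ι) (s : ι → Bool) : flipOn A (flipOn A s) = s := by
  funext k
  by_cases hk : k ∈ A <;> simp [flipOn, hk]

lemma flipOn_apply_of_notMem {A : Finset ι} {k : ι} (hk : k ∉ A) (s : ι → Bool) :
    flipOn A s k = s k := by
  simp [flipOn, hk]

lemma rademacher_flipOn (A : Finset ι) (s : ι → Bool) (k : ι) :
    rademacher (flipOn A s) k = if k ∈ A then -rademacher s k else rademacher s k := by
  by_cases hk : k ∈ A <;> cases h : s k <;> simp [rademacher, flipOn, hk, h]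

lemma signSum_flipOn_add (A B : Finset ι) (y : ι → E) (s : ι → Bool) :
    signSum B y (flipOn A s) + signSum B y s = (2 : ℝ) • signSum (B \ A) y s := by
  rw [signSum, signSum, signSum, ← sum_add_distrib, smul_sum, sdiff_eq_filter, sum_filter]
  refine sum_congr rfl fun k _ => ?_
  by_cases hk : k ∈ A <;> simp [rademacher_flipOn, hk, ← add_smul, two_smul]

variable [Fintype ι]

lemma sum_comp_flipOn {M : Type*} [AddCommMonoid M] (A : Finset ι) (f : (ι → Bool) → M) :
    ∑ s, f (flipOn A s) = ∑ s, f s :=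
  Fintype.sum_bijective _ (Function.Involutive.bijective (flipOn_flipOn A)) _ _ fun _ => rfl

lemma card_filter_flipOn (A : Finset ι) (p : (ι → Bool) → Prop) [DecidablePred p] :
    #{s | p (flipOn A s)} = #{s | p s} := by
  rw [card_filter, card_filter]
  exact sum_comp_flipOn A fun s => if p s then 1 else 0

lemma card_filter_le_two_mul_of_flipOn (A : Finset ι) {p q : (ι → Bool) → Prop}
    [DecidablePred p] [DecidablePred q] (h : ∀ s, p s → q s ∨ q (flipOn A s)) :
    #{s | p s} ≤ 2 * #{s | q s} :=
  calc #{s | p s} ≤ #(({s | q s} : Finset _) ∪ ({s | q (flipOn A s)} : Finset _)) :=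
        card_le_card fun s hs => by simpa using h s (by simpa using hs)
    _ ≤ #{s | q s} + #{s | q (flipOn A s)} := card_union_le _ _
    _ = 2 * #{s | q s} := by rw [card_filter_flipOn]; ring

end SignFlips

lemma lt_norm_or_lt_norm_of_add_eq_two_smul {E : Type*} [NormedAddCommGroup E] [NormedSpace ℝ E]
    {u : ℝ} {a b c : E} (habc : a + b = (2 : ℝ) • c)
    (hc : u < ‖c‖) : u < ‖a‖ ∨ u < ‖b‖ := by
  by_contra! h
  have : 2 * ‖c‖ ≤ ‖a‖ + ‖b‖ := by
    simpa [habc, norm_smul] using norm_add_le a b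
  linarith

section RademacherSums

variable {ι : Type*} [DecidableEq ι] [Fintype ι]

lemma card_lt_norm_signSum_le {E : Type*} [NormedAddCommGroup E] [NormedSpace ℝ E]
    (A : Finset ι) (y : ι → E) (u : ℝ) :
    #{s | u < ‖signSum A y s‖} ≤ 2 * #{s | u < ‖signSum univ y s‖} :=
  card_filter_le_two_mul_of_flipOn (univ \ A) fun s hs =>
    (lt_norm_or_lt_norm_of_add_eq_two_smul (by
      rw [signSum_flipOn_add, sdiff_sdiff_right_self, inf_eq_inter, univ_inter]) hs).symm

lemma card_filter_and_mul_card (A : Finset ι) {p q : (ι → Bool) → Prop}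
    [DecidablePred p] [DecidablePred q]
    (hp : ∀ s s', (∀ k ∈ A, s k = s' k) → p s → p s')
    (hq : ∀ s s', (∀ k ∉ A, s k = s' k) → q s → q s') :
    #{s | p s ∧ q s} * Fintype.card (ι → Bool) = #{s | p s} * #{s | q s} := by
  -- Exchanging two sign patterns off `A` is an involution of pairs carrying
  -- `{p ∧ q} ×ˢ univ` onto `{p} ×ˢ {q}`.
  let swap : (ι → Bool) × (ι → Bool) → (ι → Bool) × (ι → Bool) :=
    fun z => (A.piecewise z.1 z.2, A.piecewise z.2 z.1)
  have swap_swap : ∀ z, swap (swap z) = z := fun z => by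
    ext k <;> by_cases hk : k ∈ A <;> simp [swap, hk]
  rw [← card_univ, ← card_product, ← card_product]
  refine card_nbij' swap swap ?_ ?_ (fun z _ => swap_swap z) (fun z _ => swap_swap z)
  · rintro ⟨a, b⟩ h
    simp only [mem_coe, mem_product, mem_filter, mem_univ, true_and, and_true] at h ⊢
    exact ⟨hp a _ (fun k hk => by simp [swap, hk]) h.1,
      hq a _ (fun k hk => by simp [swap, hk]) h.2⟩
  · rintro ⟨a, b⟩ h
    simp only [mem_coe, mem_product, mem_filter, mem_univ, true_and, and_true] at h ⊢
    exact ⟨hp a _ (fun k hk => by simp [swap, hk]) h.1,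
      hq b _ (fun k hk => by simp [swap, hk]) h.2⟩

lemma sum_rademacher_mul_rademacher (j k : ι) :
    ∑ s : ι → Bool, rademacher s j * rademacher s k =
      if j = k then (Fintype.card (ι → Bool) : ℝ) else 0 := by
  split_ifs with hjk
  · subst hjk
    have : ∀ s : ι → Bool, rademacher s j * rademacher s j = 1 := fun s => by
      cases h : s j <;> simp [rademacher, h]
    simp [this]
  · have hneg := sum_comp_flipOn {j} fun s => rademacher s j * rademacher s k
    simp only [rademacher_flipOn, mem_singleton, if_true, if_neg (Ne.symm hjk), neg_mul,
      sum_neg_distrib] at hneg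
    linarith

lemma sum_bilinear_signSum {E F G : Type*} [AddCommGroup E] [Module ℝ E] [AddCommGroup F]
    [Module ℝ F] [AddCommGroup G] [Module ℝ G] (B : E →ₗ[ℝ] F →ₗ[ℝ] G) (x : ι → E) (y : ι → F) :
    ∑ s : ι → Bool, B (signSum univ x s) (signSum univ y s) =
      (Fintype.card (ι → Bool) : ℝ) • ∑ k, B (x k) (y k) := by
  calc ∑ s : ι → Bool, B (signSum univ x s) (signSum univ y s)
      = ∑ k, ∑ j, (∑ s : ι → Bool, rademacher s j * rademacher s k) • B (x j) (y k) := by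
        simp only [signSum, map_sum, LinearMap.sum_apply, map_smul, LinearMap.smul_apply,
          smul_sum, smul_smul, sum_smul]
        rw [sum_comm]
        refine sum_congr rfl fun k _ => sum_comm.trans (sum_congr rfl fun j _ => ?_)
        simp only [mul_comm]
    _ = (Fintype.card (ι → Bool) : ℝ) • ∑ k, B (x k) (y k) := by
        simp [sum_rademacher_mul_rademacher, ite_smul, smul_sum]

lemma norm_le_expect_norm_signSum {E : Type*} [NormedAddCommGroup E] [NormedSpace ℝ E]
    (y : ι → E) (k : ι) : ‖y k‖ ≤ 𝔼 s, ‖signSum univ y s‖ := by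
  have hsign : ∀ s, signSum univ (Pi.single k (1 : ℝ)) s = rademacher s k := fun s => by
    simp [signSum, Pi.single_apply]
  have h := sum_bilinear_signSum (LinearMap.lsmul ℝ E) (Pi.single k 1) y
  simp only [LinearMap.lsmul_apply, hsign, Pi.single_apply, ite_smul, one_smul, zero_smul,
    sum_ite_eq', mem_univ, if_true] at h
  rw [Fintype.expect_eq_sum_div_card, le_div_iff₀ (by positivity), mul_comm, ← Real.norm_natCast,
    ← norm_smul, ← h]
  exact (norm_sum_le _ _).trans (sum_le_sum fun s _ => by rw [norm_smul, norm_rademacher, one_mul])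

end RademacherSums

section HoffmannJorgensen

variable {N : ℕ} {E : Type*} [NormedAddCommGroup E] [NormedSpace ℝ E]

def partialSum (y : Fin N → E) (j : ℕ) (s : Fin N → Bool) : E :=
  signSum {k : Fin N | (k : ℕ) < j} y s

lemma partialSum_zero (y : Fin N → E) (s : Fin N → Bool) : partialSum y 0 s = 0 := by
  simp [partialSum, signSum]

lemma partialSum_of_le (y : Fin N → E) {j : ℕ} (hj : N ≤ j) (s : Fin N → Bool) :
    partialSum y j s = signSum univ y s := by
  rw [partialSum, filter_true_of_mem fun k _ => k.2.trans_le hj]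

lemma partialSum_add_signSum (y : Fin N → E) (j : ℕ) (s : Fin N → Bool) :
    partialSum y j s + signSum {k : Fin N | j ≤ (k : ℕ)} y s = signSum univ y s := by
  simp only [partialSum, signSum, ← not_lt]
  exact sum_filter_add_sum_filter_not _ _ _

lemma partialSum_congr (y : Fin N → E) {i j : ℕ} (hij : i ≤ j) {s s' : Fin N → Bool}
    (h : ∀ k : Fin N, (k : ℕ) < j → s k = s' k) : partialSum y i s = partialSum y i s' :=
  signSum_congr _ y fun k hk => h k ((mem_filter.1 hk).2.trans_le hij)

lemma norm_partialSum_succ_sub_le {y : Fin N → E} {M : ℝ} (hM0 : 0 ≤ M)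
    (hM : ∀ k, ‖y k‖ ≤ M) (j : ℕ) (s : Fin N → Bool) :
    ‖partialSum y (j + 1) s - partialSum y j s‖ ≤ M := by
  by_cases hj : j < N
  · have : univ.filter (fun k : Fin N => (k : ℕ) < j + 1) =
        insert ⟨j, hj⟩ (univ.filter fun k : Fin N => (k : ℕ) < j) := by
      ext k; simp [le_iff_eq_or_lt, Fin.ext_iff]
    rw [partialSum, this, signSum, sum_insert (by simp), ← signSum, ← partialSum,
      add_sub_cancel_right, norm_smul, norm_rademacher, one_mul]
    exact hM _
  · rw [partialSum_of_le y (by omega), partialSum_of_le y (by omega), sub_self, norm_zero]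
    exact hM0

variable (y : Fin N → E) (u : ℝ)

def IsFirstPassage (j : ℕ) (s : Fin N → Bool) : Prop :=
  u < ‖partialSum y j s‖ ∧ ∀ i < j, ‖partialSum y i s‖ ≤ u

instance (j : ℕ) : DecidablePred (IsFirstPassage y u j) := fun s => by
  unfold IsFirstPassage; infer_instance

variable {y u}

lemma exists_isFirstPassage {j : ℕ} {s : Fin N → Bool} (h : u < ‖partialSum y j s‖) :
    ∃ i ≤ j, IsFirstPassage y u i s := by
  classical
  have hex : ∃ i, u < ‖partialSum y i s‖ := ⟨j, h⟩
  exact ⟨Nat.find hex, Nat.find_min' hex h, Nat.find_spec hex,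
    fun i hi => not_lt.1 (Nat.find_min hex hi)⟩

lemma IsFirstPassage.eq {i j : ℕ} {s : Fin N → Bool} (hi : IsFirstPassage y u i s)
    (hj : IsFirstPassage y u j s) : i = j := by
  rcases lt_trichotomy i j with h | h | h
  · exact absurd (hj.2 i h) (not_le.2 hi.1)
  · exact h
  · exact absurd (hi.2 j h) (not_le.2 hj.1)

lemma IsFirstPassage.congr {j : ℕ} {s s' : Fin N → Bool}
    (h : ∀ k : Fin N, (k : ℕ) < j → s k = s' k) (hs : IsFirstPassage y u j s) :
    IsFirstPassage y u j s' := by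
  refine ⟨?_, fun i hi => ?_⟩
  · rw [← partialSum_congr y le_rfl h]; exact hs.1
  · rw [← partialSum_congr y hi.le h]; exact hs.2 i hi

lemma IsFirstPassage.norm_le {M : ℝ} (hu : 0 ≤ u) (hM0 : 0 ≤ M) (hM : ∀ k, ‖y k‖ ≤ M)
    {j : ℕ} {s : Fin N → Bool} (hs : IsFirstPassage y u j s) :
    ‖partialSum y j s‖ ≤ u + M := by
  obtain _ | i := j
  · have := hs.1
    rw [partialSum_zero, norm_zero] at this
    linarith
  · calc ‖partialSum y (i + 1) s‖
        ≤ ‖partialSum y i s‖ + ‖partialSum y (i + 1) s - partialSum y i s‖ :=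
          norm_le_norm_add_norm_sub' _ _
      _ ≤ u + M := add_le_add (hs.2 i i.lt_succ_self) (norm_partialSum_succ_sub_le hM0 hM i s)

/-- Lévy's maximal inequality for the partial sums of a Rademacher sum. -/
lemma sum_card_isFirstPassage_le :
    ∑ j ∈ range (N + 1), #{s | IsFirstPassage y u j s} ≤
      2 * #{s | u < ‖signSum univ y s‖} := by
  have hflip : ∀ j, #{s | IsFirstPassage y u j s} ≤
      2 * #{s | IsFirstPassage y u j s ∧ u < ‖signSum univ y s‖} := fun j =>
    card_filter_le_two_mul_of_flipOn {k : Fin N | j ≤ (k : ℕ)} fun s hs => by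
      have hflip_fp : IsFirstPassage y u j (flipOn {k : Fin N | j ≤ (k : ℕ)} s) :=
        hs.congr fun k hk => (flipOn_apply_of_notMem (by simpa using hk) s).symm
      have hsum : signSum univ y (flipOn {k : Fin N | j ≤ (k : ℕ)} s) + signSum univ y s =
          (2 : ℝ) • partialSum y j s := by
        rw [signSum_flipOn_add, ← filter_not]
        simp only [not_le, partialSum]
      rcases lt_norm_or_lt_norm_of_add_eq_two_smul hsum hs.1 with h | h
      · exact Or.inr ⟨hflip_fp, h⟩
      · exact Or.inl ⟨hs, h⟩
  have hdisj : ∑ j ∈ range (N + 1),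
      #{s | IsFirstPassage y u j s ∧ u < ‖signSum univ y s‖} ≤
        #{s | u < ‖signSum univ y s‖} := by
    rw [← card_biUnion fun i _ j _ hij => disjoint_filter.2 fun s _ hi hj => hij (hi.1.eq hj.1)]
    exact card_le_card fun s hs => by
      obtain ⟨j, -, hj⟩ := mem_biUnion.1 hs
      exact mem_filter.2 ⟨mem_univ s, (mem_filter.1 hj).2.2⟩
  calc ∑ j ∈ range (N + 1), #{s | IsFirstPassage y u j s}
      ≤ ∑ j ∈ range (N + 1), 2 * #{s | IsFirstPassage y u j s ∧ u < ‖signSum univ y s‖} :=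
        sum_le_sum fun j _ => hflip j
    _ ≤ 2 * #{s | u < ‖signSum univ y s‖} := by
        rw [← mul_sum]; exact Nat.mul_le_mul_left 2 hdisj

/-- The Hoffmann-Jørgensen inequality for Rademacher sums. -/
theorem card_lt_norm_signSum_mul_le {M : ℝ} (hu : 0 ≤ u) (hM0 : 0 ≤ M) (hM : ∀ k, ‖y k‖ ≤ M) :
    #{s | 2 * u + M < ‖signSum univ y s‖} * 2 ^ N ≤
      4 * #{s | u < ‖signSum univ y s‖} ^ 2 := by
  set m := #{s | u < ‖signSum univ y s‖}
  let R (j : ℕ) (s : Fin N → Bool) : E := signSum {k : Fin N | j ≤ (k : ℕ)} y s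
  have hcover : ∀ s, 2 * u + M < ‖signSum univ y s‖ →
      ∃ j ∈ range (N + 1), IsFirstPassage y u j s ∧ u < ‖R j s‖ := by
    intro s hs
    have hN : u < ‖partialSum y N s‖ := by rw [partialSum_of_le y le_rfl]; linarith
    obtain ⟨j, hjN, hj⟩ := exists_isFirstPassage hN
    refine ⟨j, mem_range.2 (Nat.lt_succ_of_le hjN), hj, ?_⟩
    have hR : R j s = signSum univ y s - partialSum y j s :=
      eq_sub_of_add_eq' (partialSum_add_signSum y j s)
    have := hj.norm_le hu hM0 hM
    rw [hR]
    linarith [norm_sub_norm_le (signSum univ y s) (partialSum y j s)]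
  have hindep : ∀ j, #{s | IsFirstPassage y u j s ∧ u < ‖R j s‖} * 2 ^ N =
      #{s | IsFirstPassage y u j s} * #{s | u < ‖R j s‖} := fun j => by
    rw [← card_filter_and_mul_card {k : Fin N | (k : ℕ) < j}
      (fun s s' h hs => hs.congr fun k hk => h k (by simpa using hk))
      (fun s s' h hs => by
        change u < ‖signSum _ y s'‖
        rwa [← signSum_congr _ y fun k hk => h k (by simpa using hk)])]
    simp
  calc #{s | 2 * u + M < ‖signSum univ y s‖} * 2 ^ N
      ≤ (∑ j ∈ range (N + 1), #{s | IsFirstPassage y u j s ∧ u < ‖R j s‖}) * 2 ^ N := by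
        gcongr
        refine (card_le_card fun s hs => ?_).trans card_biUnion_le
        obtain ⟨j, hj, hs⟩ := hcover s (mem_filter.1 hs).2
        exact mem_biUnion.2 ⟨j, hj, mem_filter.2 ⟨mem_univ s, hs⟩⟩
    _ = ∑ j ∈ range (N + 1), #{s | IsFirstPassage y u j s} * #{s | u < ‖R j s‖} := by
        rw [sum_mul]; exact sum_congr rfl fun j _ => hindep j
    _ ≤ ∑ j ∈ range (N + 1), #{s | IsFirstPassage y u j s} * (2 * m) :=
        sum_le_sum fun j _ => Nat.mul_le_mul_left _ (card_lt_norm_signSum_le _ y u)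
    _ ≤ 2 * m * (2 * m) := by rw [← sum_mul]; gcongr; exact sum_card_isFirstPassage_le
    _ = 4 * m ^ 2 := by ring

end HoffmannJorgensen

section Kahane

lemma sq_le_sq_add_sum_ite_of_le {u : ℕ → ℝ} {x : ℝ} (hx : 0 ≤ x) {K : ℕ} (hK : x ≤ u K) :
    x ^ 2 ≤ u 0 ^ 2 + ∑ n ∈ range K, if u n < x then u (n + 1) ^ 2 else 0 := by
  have hterm : ∀ n, 0 ≤ if u n < x then u (n + 1) ^ 2 else 0 := fun n => by positivity
  induction K with
  | zero => simpa using pow_le_pow_left₀ hx hK 2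
  | succ K ih =>
    rw [sum_range_succ]
    by_cases hxK : x ≤ u K
    · linarith [ih hxK, hterm K]
    · rw [if_pos (not_le.1 hxK)]
      have : 0 ≤ u 0 ^ 2 + ∑ n ∈ range K, if u n < x then u (n + 1) ^ 2 else 0 :=
        add_nonneg (sq_nonneg _) (sum_nonneg fun n _ => hterm n)
      linarith [pow_le_pow_left₀ hx hK 2]

lemma le_pow_two_pow_of_le_sq {a : ℕ → ℝ} (h0 : ∀ n, 0 ≤ a n) (h : ∀ n, a (n + 1) ≤ a n ^ 2)
    (n : ℕ) : a n ≤ a 0 ^ 2 ^ n := by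
  induction n with
  | zero => simp
  | succ n ih =>
    calc a (n + 1) ≤ a n ^ 2 := h n
      _ ≤ (a 0 ^ 2 ^ n) ^ 2 := pow_le_pow_left₀ (h0 n) ih 2
      _ = a 0 ^ 2 ^ (n + 1) := by rw [← pow_mul, pow_succ]

lemma three_mul_le_two_pow_add_two : ∀ n : ℕ, 3 * n ≤ 2 ^ n + 2
  | 0 | 1 => by norm_num
  | n + 2 => by
    have := three_mul_le_two_pow_add_two (n + 1)
    have : 2 ≤ 2 ^ (n + 1) := Nat.le_self_pow (by omega) 2
    rw [pow_succ 2 (n + 1)]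
    omega

lemma four_pow_mul_half_pow_two_pow_le (n : ℕ) :
    (4 : ℝ) ^ n * (1 / 2) ^ 2 ^ n ≤ 4 * (1 / 2) ^ n := by
  have h : (2 : ℝ) ^ (3 * n) ≤ 2 ^ (2 ^ n + 2) :=
    pow_le_pow_right₀ (by norm_num) (three_mul_le_two_pow_add_two n)
  rw [pow_mul, pow_add] at h
  rw [one_div_pow, one_div_pow, mul_one_div, mul_one_div,
    div_le_div_iff₀ (by positivity) (by positivity), ← mul_pow]
  norm_num at h ⊢
  linarith

lemma card_lt_mul_le_sum {α : Type*} [Fintype α] {f : α → ℝ} (hf : ∀ a, 0 ≤ f a) (u : ℝ) :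
    (#{a | u < f a} : ℝ) * u ≤ ∑ a, f a :=
  calc (#{a | u < f a} : ℝ) * u = ∑ a with u < f a, u := by rw [sum_const, nsmul_eq_mul]
    _ ≤ ∑ a with u < f a, f a := sum_le_sum fun a ha => (mem_filter.1 ha).2.le
    _ ≤ ∑ a, f a := sum_le_sum_of_subset_of_nonneg (filter_subset _ _) fun a _ _ => hf a

variable {N : ℕ} {E : Type*} [NormedAddCommGroup E] [NormedSpace ℝ E]

lemma norm_signSum_le (A : Finset (Fin N)) (y : Fin N → E) (s : Fin N → Bool) :
    ‖signSum A y s‖ ≤ ∑ k ∈ A, ‖y k‖ :=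
  (norm_sum_le _ _).trans_eq (sum_congr rfl fun k _ => by rw [norm_smul, norm_rademacher, one_mul])

/-- Iterate the Hoffmann-Jørgensen inequality along the levels `u (n + 1) = 2 * u n + M`,
starting from the Markov bound at `u 0 = 8 * M`. -/
lemma four_mul_card_lt_norm_signSum_le {y : Fin N → E} {M : ℝ} (hM : 0 < M)
    (hy : ∀ k, ‖y k‖ ≤ M) (hmean : ∑ s, ‖signSum univ y s‖ ≤ 2 ^ N * M) (n : ℕ) :
    4 * (#{s | (9 * 2 ^ n - 1) * M < ‖signSum univ y s‖} : ℝ) ≤ 2 ^ N * (1 / 2) ^ 2 ^ n := by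
  set a : ℕ → ℝ := fun n => 4 * #{s | (9 * 2 ^ n - 1) * M < ‖signSum univ y s‖} / 2 ^ N
  have h2N : (0 : ℝ) < 2 ^ N := by positivity
  have ha0 : a 0 ≤ 1 / 2 := by
    have := card_lt_mul_le_sum (fun s => norm_nonneg (signSum univ y s)) (8 * M)
    simp only [a, div_le_iff₀ h2N]
    norm_num at this ⊢
    nlinarith
  have hstep : ∀ n, a (n + 1) ≤ a n ^ 2 := fun n => by
    have hu : (0 : ℝ) ≤ (9 * 2 ^ n - 1) * M :=
      mul_nonneg (by linarith [one_le_pow₀ (M₀ := ℝ) (n := n) one_le_two]) hM.le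
    have hHJ := card_lt_norm_signSum_mul_le hu hM.le hy
    rw [show 2 * ((9 * 2 ^ n - 1) * M) + M = (9 * 2 ^ (n + 1) - 1) * M by ring] at hHJ
    simp only [a, div_pow, mul_pow]
    rw [div_le_div_iff₀ h2N (by positivity)]
    have := (Nat.cast_le (α := ℝ)).2 hHJ
    push_cast at this
    nlinarith
  have := le_pow_two_pow_of_le_sq (fun n => by positivity) hstep n
  have := this.trans (pow_le_pow_left₀ (by positivity) ha0 _)
  simp only [a, div_le_iff₀ h2N] at this
  linarith

/-- Kahane's inequality. -/
theorem expect_sq_norm_signSum_le (y : Fin N → E) :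
    𝔼 s, ‖signSum univ y s‖ ^ 2 ≤ 712 * (𝔼 s, ‖signSum univ y s‖) ^ 2 := by
  have hcard : (Fintype.card (Fin N → Bool) : ℝ) = 2 ^ N := by simp
  have hmean : ∑ s, ‖signSum univ y s‖ = 2 ^ N * 𝔼 s, ‖signSum univ y s‖ := by
    rw [Fintype.expect_eq_sum_div_card, hcard, mul_div_cancel₀ _ (by positivity)]
  have hy := norm_le_expect_norm_signSum y
  set M := 𝔼 s, ‖signSum univ y s‖
  rcases (expect_nonneg fun s _ => norm_nonneg (signSum univ y s)).eq_or_lt with hM | hM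
  · have h0 : ∀ s, ‖signSum univ y s‖ = 0 := fun s =>
      (expect_eq_zero_iff_of_nonneg fun s _ => norm_nonneg (signSum univ y s)).1 hM.symm s
        (mem_univ s)
    simp only [h0, ne_eq, OfNat.ofNat_ne_zero, not_false_eq_true, zero_pow, expect_const_zero]
    positivity
  replace hM : 0 < M := hM
  set u : ℕ → ℝ := fun n => (9 * 2 ^ n - 1) * M
  have hlayer : ∀ s, ‖signSum univ y s‖ ^ 2 ≤
      u 0 ^ 2 + ∑ n ∈ range N, if u n < ‖signSum univ y s‖ then u (n + 1) ^ 2 else 0 := by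
    intro s
    refine sq_le_sq_add_sum_ite_of_le (norm_nonneg _) ((norm_signSum_le _ y s).trans ?_)
    calc ∑ k, ‖y k‖ ≤ N * M := by simpa using sum_le_sum fun k (_ : k ∈ univ) => hy k
      _ ≤ u N := by
        have : (N : ℝ) < 2 ^ N := by exact_mod_cast Nat.lt_two_pow_self
        simp only [u]
        nlinarith [one_le_pow₀ (M₀ := ℝ) (n := N) one_le_two]
  have hterm : ∀ n, u (n + 1) ^ 2 * (#{s | u n < ‖signSum univ y s‖} / 2 ^ N) ≤
      324 * M ^ 2 * (1 / 2) ^ n := by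
    intro n
    have htail := four_mul_card_lt_norm_signSum_le hM hy hmean.le n
    have hu : u (n + 1) ^ 2 ≤ 324 * 4 ^ n * M ^ 2 := by
      have h1 : (1 : ℝ) ≤ 2 ^ n := one_le_pow₀ one_le_two
      calc u (n + 1) ^ 2 ≤ (18 * 2 ^ n * M) ^ 2 := by
            simp only [u]
            have h2 : (1 : ℝ) ≤ 2 ^ (n + 1) := one_le_pow₀ one_le_two
            gcongr
            · exact mul_nonneg (by linarith) hM.le
            · rw [pow_succ]; linarith
        _ = 324 * 4 ^ n * M ^ 2 := by
            rw [show (4 : ℝ) ^ n = (2 ^ n) ^ 2 by rw [← pow_mul, mul_comm, pow_mul]; norm_num]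
            ring
    calc u (n + 1) ^ 2 * (#{s | u n < ‖signSum univ y s‖} / 2 ^ N)
        ≤ 324 * 4 ^ n * M ^ 2 * (1 / 4 * (1 / 2) ^ 2 ^ n) := by
          gcongr
          rw [div_le_iff₀ (by positivity)]
          linarith
      _ = 81 * M ^ 2 * (4 ^ n * (1 / 2) ^ 2 ^ n) := by ring
      _ ≤ 81 * M ^ 2 * (4 * (1 / 2) ^ n) := 
          mul_le_mul_of_nonneg_left (four_pow_mul_half_pow_two_pow_le n) (by positivity)
      _ = 324 * M ^ 2 * (1 / 2) ^ n := by ring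
  calc 𝔼 s, ‖signSum univ y s‖ ^ 2
      ≤ 𝔼 s, (u 0 ^ 2 + ∑ n ∈ range N,
          if u n < ‖signSum univ y s‖ then u (n + 1) ^ 2 else 0) :=
        expect_le_expect fun s _ => hlayer s
    _ = u 0 ^ 2 + ∑ n ∈ range N, u (n + 1) ^ 2 * (#{s | u n < ‖signSum univ y s‖} / 2 ^ N) := by
        rw [expect_add_distrib, expect_const univ_nonempty, expect_sum_comm]
        congr 1
        refine sum_congr rfl fun n _ => ?_
        rw [Fintype.expect_eq_sum_div_card, hcard, sum_ite, sum_const_zero, add_zero, sum_const,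
          nsmul_eq_mul, mul_comm, mul_div_assoc]
    _ ≤ 64 * M ^ 2 + ∑ n ∈ range N, 324 * M ^ 2 * (1 / 2) ^ n := by
        refine add_le_add ?_ (sum_le_sum fun n _ => hterm n)
        simp only [u]
        norm_num
        nlinarith
    _ ≤ 712 * M ^ 2 := by
        rw [← mul_sum]
        nlinarith [sum_geometric_two_le N, sq_nonneg M]

end Kahane

section Duality

variable {N : ℕ}

lemma expect_norm_signSum_eq {E : Type*} [NormedAddCommGroup E] [NormedSpace ℝ E]
    (y : Fin N → E) :
    𝔼 s, ‖signSum univ y s‖ =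
      (∑ s : Fin N → Bool, ‖∑ k, (if s k then (1 : ℝ) else -1) • y k‖) / 2 ^ N := by
  rw [Fintype.expect_eq_sum_div_card]
  simp [signSum, rademacher]

lemma expect_norm_mul_norm_signSum_le {E F : Type*} [NormedAddCommGroup E] [NormedSpace ℝ E]
    [NormedAddCommGroup F] [NormedSpace ℝ F] (x : Fin N → E) (y : Fin N → F) :
    𝔼 s, ‖signSum univ x s‖ * ‖signSum univ y s‖ ≤
      712 * (𝔼 s, ‖signSum univ x s‖) * 𝔼 s, ‖signSum univ y s‖ := by
  refine le_of_pow_le_pow_left₀ two_ne_zero (by positivity) ?_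
  calc (𝔼 s, ‖signSum univ x s‖ * ‖signSum univ y s‖) ^ 2
      ≤ (𝔼 s, ‖signSum univ x s‖ ^ 2) * 𝔼 s, ‖signSum univ y s‖ ^ 2 :=
        expect_mul_sq_le_sq_mul_sq _ _ _
    _ ≤ (712 * (𝔼 s, ‖signSum univ x s‖) ^ 2) * (712 * (𝔼 s, ‖signSum univ y s‖) ^ 2) :=
        mul_le_mul (expect_sq_norm_signSum_le x) (expect_sq_norm_signSum_le y)
          (by positivity) (by positivity)
    _ = (712 * (𝔼 s, ‖signSum univ x s‖) * 𝔼 s, ‖signSum univ y s‖) ^ 2 := by ring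

lemma expect_apply_signSum {ι X : Type*} [Fintype ι] [DecidableEq ι] [NormedAddCommGroup X]
    [NormedSpace ℝ X] (φ : ι → StrongDual ℝ X) (x : ι → X) :
    𝔼 s, signSum univ φ s (signSum univ x s) = ∑ k, φ k (x k) := by
  rw [Fintype.expect_eq_sum_div_card]
  have := sum_bilinear_signSum (ContinuousLinearMap.coeLM ℝ) φ x
  simp only [ContinuousLinearMap.coeLM_apply, ContinuousLinearMap.coe_coe, smul_eq_mul] at this
  rw [this, mul_div_cancel_left₀ _ (by positivity)]

lemma StrongDual.exists_norm_le_one_and_half_norm_le_apply {X : Type*} [NormedAddCommGroup X]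
    [NormedSpace ℝ X] (φ : StrongDual ℝ X) : ∃ w : X, ‖w‖ ≤ 1 ∧ ‖φ‖ / 2 ≤ φ w := by
  rcases (norm_nonneg φ).eq_or_lt with hφ | hφ
  · exact ⟨0, by simp, by simp [← hφ]⟩
  obtain ⟨z, hz, hφz⟩ := φ.exists_lt_apply_of_lt_opNorm (half_lt_self hφ)
  rw [Real.norm_eq_abs] at hφz
  rcases le_total 0 (φ z) with h | h
  · exact ⟨z, hz.le, by rw [abs_of_nonneg h] at hφz; exact hφz.le⟩
  · exact ⟨-z, by rw [norm_neg]; exact hz.le, by rw [abs_of_nonpos h] at hφz; simp [hφz.le]⟩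

lemma StrongDual.exists_norm_rpow_le_and_half_rpow_le_apply {X : Type*} [NormedAddCommGroup X]
    [NormedSpace ℝ X] (φ : StrongDual ℝ X) {t : ℝ} (ht : 1 < t) :
    ∃ x : X, ‖x‖ ^ t ≤ ‖φ‖ ^ (t / (t - 1)) ∧ ‖φ‖ ^ (t / (t - 1)) / 2 ≤ φ x := by
  obtain ⟨w, hw, hφw⟩ := φ.exists_norm_le_one_and_half_norm_le_apply
  have hexp : 1 / (t - 1) + 1 = t / (t - 1) := by
    field_simp [sub_ne_zero.2 ht.ne']
    ring
  set r := ‖φ‖ ^ (1 / (t - 1))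
  have hr : 0 ≤ r := by positivity
  refine ⟨r • w, ?_, ?_⟩
  · calc ‖r • w‖ ^ t ≤ r ^ t := by
          gcongr
          rw [norm_smul, Real.norm_of_nonneg hr]
          exact mul_le_of_le_one_right hr hw
      _ = ‖φ‖ ^ (t / (t - 1)) := by
          rw [← Real.rpow_mul (norm_nonneg φ), one_div_mul_eq_div]
  · calc ‖φ‖ ^ (t / (t - 1)) / 2 = r * (‖φ‖ / 2) := by
          rw [← hexp, Real.rpow_add_one' (norm_nonneg φ) (by rw [hexp]; positivity)]
          ring
      _ ≤ r * φ w := mul_le_mul_of_nonneg_left hφw hr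
      _ = φ (r • w) := by rw [map_smul, smul_eq_mul]

lemma rpow_le_of_le_mul_rpow {A c t : ℝ} (hA : 0 ≤ A) (hc : 0 ≤ c) (ht : 1 < t)
    (h : A ≤ c * A ^ (1 / t)) : A ^ ((t - 1) / t) ≤ c := by
  rcases hA.eq_or_lt with rfl | hA
  · rw [Real.zero_rpow (div_ne_zero (by linarith) (by linarith))]
    exact hc
  have hsplit : A = A ^ ((t - 1) / t) * A ^ (1 / t) := by
    rw [← Real.rpow_add hA, ← add_div, sub_add_cancel, div_self (by linarith), Real.rpow_one]
  rw [← mul_le_mul_iff_of_pos_right (Real.rpow_pos_of_pos hA (1 / t)), ← hsplit]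
  exact h

end Duality

theorem stmt17_general (X : Type*) [NormedAddCommGroup X] [NormedSpace ℝ X]
    (t T : ℝ) (ht1 : 1 < t) (hT : 0 < T)
    (htype : ∀ (N : ℕ) (x : Fin N → X),
      (∑ s : Fin N → Bool, ‖∑ k, (if s k then (1 : ℝ) else -1) • x k‖) / 2 ^ N ≤
        T * (∑ k, ‖x k‖ ^ t) ^ (1 / t)) :
    ∃ C : ℝ, 0 < C ∧ ∀ (N : ℕ) (x : Fin N → StrongDual ℝ X),
      (∑ k, ‖x k‖ ^ (t / (t - 1))) ^ ((t - 1) / t) ≤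
        C * ((∑ s : Fin N → Bool, ‖∑ k, (if s k then (1 : ℝ) else -1) • x k‖) / 2 ^ N) := by
  refine ⟨1424 * T, by positivity, fun N φ => ?_⟩
  choose x hxt hφx using fun k => (φ k).exists_norm_rpow_le_and_half_rpow_le_apply ht1
  set A := ∑ k, ‖φ k‖ ^ (t / (t - 1))
  have htype_x : 𝔼 s, ‖signSum univ x s‖ ≤ T * A ^ (1 / t) := by
    rw [expect_norm_signSum_eq]
    exact (htype N x).trans (by gcongr; exact sum_le_sum fun k _ => hxt k)
  suffices A ^ ((t - 1) / t) ≤ 1424 * T * 𝔼 s, ‖signSum univ φ s‖ by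
    rwa [expect_norm_signSum_eq] at this
  refine rpow_le_of_le_mul_rpow (by positivity) (by positivity) ht1 ?_
  calc A ≤ 2 * ∑ k, φ k (x k) := by rw [mul_sum]; exact sum_le_sum fun k _ => by linarith [hφx k]
    _ = 2 * 𝔼 s, signSum univ φ s (signSum univ x s) := by rw [expect_apply_signSum]
    _ ≤ 2 * 𝔼 s, ‖signSum univ φ s‖ * ‖signSum univ x s‖ := by
        gcongr with s
        exact (le_abs_self _).trans ((signSum univ φ s).le_opNorm _)
    _ ≤ 2 * (712 * (𝔼 s, ‖signSum univ φ s‖) * (T * A ^ (1 / t))) := by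
        gcongr
        exact (expect_norm_mul_norm_signSum_le φ x).trans (by gcongr)
    _ = 1424 * T * (𝔼 s, ‖signSum univ φ s‖) * A ^ (1 / t) := by ring

/-- If a Banach space `X` has (Rademacher) type `t ∈ (1,2]`, i.e.
`𝔼‖∑ ε_k x_k‖ ≤ T (∑‖x_k‖^t)^{1/t}` for all finite sequences in `X`, then its dual `X*`
has cotype `t' = t/(t-1)`: there is `C` with `(∑‖x*_k‖^{t'})^{1/t'} ≤ C 𝔼‖∑ ε_k x*_k‖`
for all finite sequences in `X*`. Here the Rademacher expectation is realized as the
average over all sign patterns `s : Fin N → Bool`. -/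
theorem stmt17 (X : Type*) [NormedAddCommGroup X] [NormedSpace ℝ X] [CompleteSpace X]
    (t T : ℝ) (ht1 : 1 < t) (ht2 : t ≤ 2) (hT : 0 < T)
    (htype : ∀ (N : ℕ) (x : Fin N → X),
      (∑ s : Fin N → Bool, ‖∑ k, (if s k then (1 : ℝ) else -1) • x k‖) / 2 ^ N ≤
        T * (∑ k, ‖x k‖ ^ t) ^ (1 / t)) :
    ∃ C : ℝ, 0 < C ∧ ∀ (N : ℕ) (x : Fin N → StrongDual ℝ X),
      (∑ k, ‖x k‖ ^ (t / (t - 1))) ^ ((t - 1) / t) ≤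
        C * ((∑ s : Fin N → Bool, ‖∑ k, (if s k then (1 : ℝ) else -1) • x k‖) / 2 ^ N) :=
  stmt17_general X t T ht1 hT htype
end
end
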